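/- arXiv:2509.20345 — 3 statements merged into one kernel-verified Lean document; each statement's English description precedes it below -/
import Mathlib

section
/- Fix α, ε > 0 and suppose the family of algorithms 𝒜 satisfies the level-β risk guarantee for both β = α and β = α + ε, and that the action space, loss and algorithms satisfy the ordering conditions (existence of meets, boundedness of ℓ by c, monotonicity of ℓ, monotonicity of 𝒜 in the level). Then for every P, Q ∈ 𝒫 and all n, N ∈ ℕ, the GESPI procedure Ã(D_n, D̃_N) = 𝒜_α(D_n ∪ D̃_N) ∧ 𝒜_{α+ε}(D_n) satisfies E_{D_n ∼ Pⁿ, D̃_N ∼ Q^N, V ∼ T(P)}[ℓ(Ã(D_n, D̃_N), V)] ≤ α + min{ε, c · d_ℓ(P, Q)}, where d_ℓ(P, Q) denotes the total variation distance between the law of ℓ(𝒜_α(D_n ∪ D̃_N), V) when D_n ∼ Pⁿ, D̃_N ∼ Q^N, V ∼ T(P) (all independent) and the law of the same random variable when D_n ∼ Qⁿ, D̃_N ∼ Q^N, V ∼ T(Q). -/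
/-!
The GESPI action lies below both `𝒜_{α+ε}(Dₙ)` and `𝒜_α(Dₙ ∪ D̃_N)`, so by monotonicity of the
loss its risk is at most the risk of either. The first is at most `α + ε` by the guarantee. For
the second, replacing the law of the real data and of `V` by `Q` changes the mean of the
`[0, c]`-valued loss by at most `c · d_ℓ(P, Q)`, since by the layer-cake formula the mean is the
integral over `t ∈ (0, c]` of tail probabilities, each of which moves by at most the total
variation distance; and under `Q` the pooled sample is an i.i.d. `Q`-sample of size `n + N`, so
the guarantee at level `α` applies.
-/

open MeasureTheory

/-- Total variation distance between two measures:
`d_TV(μ, ν) = sup over measurable sets s of |μ(s) − ν(s)|`. -/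
noncomputable def tvDist {Ω : Type*} [MeasurableSpace Ω] (μ ν : Measure Ω) : ℝ :=
  ⨆ s : { s : Set Ω // MeasurableSet s }, |(μ s.1).toReal - (ν s.1).toReal|

open Set

lemma abs_sub_le_tvDist {Ω : Type*} [MeasurableSpace Ω] (μ ν : Measure Ω)
    [IsFiniteMeasure μ] [IsFiniteMeasure ν] {s : Set Ω} (hs : MeasurableSet s) :
    |μ.real s - ν.real s| ≤ tvDist μ ν := by
  refine le_ciSup (f := fun s : { s : Set Ω // MeasurableSet s } => |μ.real s.1 - ν.real s.1|)
    ⟨μ.real univ + ν.real univ, ?_⟩ ⟨s, hs⟩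
  rintro x ⟨t, rfl⟩
  calc |μ.real t.1 - ν.real t.1| ≤ |μ.real t.1| + |ν.real t.1| := abs_sub _ _
    _ ≤ μ.real univ + ν.real univ := by
      rw [abs_of_nonneg measureReal_nonneg, abs_of_nonneg measureReal_nonneg]
      exact add_le_add (measureReal_mono (subset_univ _)) (measureReal_mono (subset_univ _))

section LayerCake

variable {Ω : Type*} [MeasurableSpace Ω] {f : Ω → ℝ} {c : ℝ}

lemma integral_eq_integral_Ioc_measureReal_lt (μ : Measure Ω) [IsFiniteMeasure μ]
    (hf : Measurable f) (h0 : ∀ x, 0 ≤ f x) (h1 : ∀ x, f x ≤ c) :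
    ∫ x, f x ∂μ = ∫ t in Ioc 0 c, μ.real {x | t < f x} := by
  have hint : Integrable f μ :=
    .of_bound hf.aestronglyMeasurable c (.of_forall fun x => by
      rw [Real.norm_eq_abs, abs_of_nonneg (h0 x)]; exact h1 x)
  rw [hint.integral_eq_integral_meas_lt (.of_forall h0)]
  refine setIntegral_eq_of_subset_of_forall_sdiff_eq_zero measurableSet_Ioi Ioc_subset_Ioi_self ?_
  rintro t ⟨ht0, htc⟩
  have hempty : {x | t < f x} = ∅ :=
    eq_empty_of_forall_notMem fun x (hx : t < f x) => htc ⟨ht0, hx.le.trans (h1 x)⟩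
  rw [hempty, measureReal_empty]

lemma integrableOn_Ioc_measureReal_lt (μ : Measure Ω) [IsFiniteMeasure μ] (f : Ω → ℝ) (c : ℝ) :
    IntegrableOn (fun t => μ.real {x | t < f x}) (Ioc 0 c) := by
  have hanti : Antitone fun t => μ.real {x | t < f x} := fun s t hst =>
    measureReal_mono fun x (hx : t < f x) => hst.trans_lt hx
  exact (hanti.locallyIntegrable.integrableOn_isCompact isCompact_Icc).mono_set
    Ioc_subset_Icc_self

theorem integral_le_integral_add_mul_tvDist_map (μ ν : Measure Ω)
    [IsFiniteMeasure μ] [IsFiniteMeasure ν] (hf : Measurable f) (hc : 0 ≤ c)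
    (h0 : ∀ x, 0 ≤ f x) (h1 : ∀ x, f x ≤ c) :
    ∫ x, f x ∂μ ≤ ∫ x, f x ∂ν + c * tvDist (μ.map f) (ν.map f) := by
  set d := tvDist (μ.map f) (ν.map f)
  have htail : ∀ t, μ.real {x | t < f x} ≤ ν.real {x | t < f x} + d := fun t => by
    have h := abs_sub_le_tvDist (μ.map f) (ν.map f) (measurableSet_Ioi (a := t))
    rw [map_measureReal_apply hf measurableSet_Ioi,
      map_measureReal_apply hf measurableSet_Ioi] at h
    exact sub_le_iff_le_add'.1 ((le_abs_self _).trans h)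
  calc ∫ x, f x ∂μ = ∫ t in Ioc 0 c, μ.real {x | t < f x} :=
        integral_eq_integral_Ioc_measureReal_lt μ hf h0 h1
    _ ≤ ∫ t in Ioc 0 c, (ν.real {x | t < f x} + d) :=
        setIntegral_mono (integrableOn_Ioc_measureReal_lt μ f c)
          ((integrableOn_Ioc_measureReal_lt ν f c).add (integrableOn_const measure_Ioc_lt_top.ne))
          htail
    _ = ∫ x, f x ∂ν + c * d := by
        rw [integral_add (integrableOn_Ioc_measureReal_lt ν f c)
            (integrableOn_const measure_Ioc_lt_top.ne),
          ← integral_eq_integral_Ioc_measureReal_lt ν hf h0 h1, setIntegral_const,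
          Real.volume_real_Ioc_of_le hc, sub_zero, smul_eq_mul]

end LayerCake

section FinAppend

variable {Z : Type*} [MeasurableSpace Z] {n N : ℕ}

lemma finAppend_eq_piCongrLeft_comp_sumPiEquivProdPi_symm :
    (fun p : (Fin n → Z) × (Fin N → Z) => Fin.append p.1 p.2) =
      MeasurableEquiv.piCongrLeft (fun _ : Fin (n + N) => Z) finSumFinEquiv ∘
        (MeasurableEquiv.sumPiEquivProdPi fun _ : Fin n ⊕ Fin N => Z).symm := by
  funext ⟨a, b⟩ j
  simp only [Function.comp_apply, MeasurableEquiv.coe_piCongrLeft,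
    MeasurableEquiv.coe_sumPiEquivProdPi_symm]
  refine Fin.addCases (fun i => ?_) (fun i => ?_) j
  · rw [Fin.append_left, ← finSumFinEquiv_apply_left i]
    exact (Equiv.piCongrLeft_sumInl (fun _ => Z) finSumFinEquiv a b i).symm
  · rw [Fin.append_right, ← finSumFinEquiv_apply_right i]
    exact (Equiv.piCongrLeft_sumInr (fun _ => Z) finSumFinEquiv a b i).symm

lemma measurable_finAppend :
    Measurable fun p : (Fin n → Z) × (Fin N → Z) => Fin.append p.1 p.2 := by
  rw [finAppend_eq_piCongrLeft_comp_sumPiEquivProdPi_symm]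
  exact (MeasurableEquiv.measurable _).comp (MeasurableEquiv.measurable _)

lemma measurePreserving_finAppend (μ : Measure Z) [SigmaFinite μ] :
    MeasurePreserving (fun p : (Fin n → Z) × (Fin N → Z) => Fin.append p.1 p.2)
      ((Measure.pi fun _ : Fin n => μ).prod (Measure.pi fun _ : Fin N => μ))
      (Measure.pi fun _ : Fin (n + N) => μ) := by
  rw [finAppend_eq_piCongrLeft_comp_sumPiEquivProdPi_symm]
  exact (measurePreserving_piCongrLeft (fun _ => μ) finSumFinEquiv).comp
    (measurePreserving_sumPiEquivProdPi_symm fun _ => μ)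

lemma measurePreserving_finAppend_prod {V : Type*} [MeasurableSpace V]
    (μ : Measure Z) [SigmaFinite μ] (κ : Measure V) [SFinite κ] :
    MeasurePreserving
      (fun w : (Fin n → Z) × (Fin N → Z) × V => (Fin.append w.1 w.2.1, w.2.2))
      ((Measure.pi fun _ : Fin n => μ).prod ((Measure.pi fun _ : Fin N => μ).prod κ))
      ((Measure.pi fun _ : Fin (n + N) => μ).prod κ) :=
  ((measurePreserving_finAppend μ).prod (.id κ)).comp
    (measurePreserving_prodAssoc _ _ κ).symm

end FinAppend

lemma measurePreserving_fst_snd_snd {α β γ : Type*} [MeasurableSpace α] [MeasurableSpace β]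
    [MeasurableSpace γ] (μ : Measure α) (ν : Measure β) (κ : Measure γ)
    [SFinite μ] [IsProbabilityMeasure ν] [SFinite κ] :
    MeasurePreserving (fun w : α × β × γ => (w.1, w.2.2)) (μ.prod (ν.prod κ)) (μ.prod κ) := by
  refine ⟨measurable_fst.prodMk measurable_snd.snd, ?_⟩
  change (μ.prod (ν.prod κ)).map (Prod.map id Prod.snd) = _
  rw [← Measure.map_prod_map _ _ measurable_id measurable_snd, Measure.map_id,
    Measure.map_snd_prod, measure_univ, one_smul]

lemma MeasureTheory.MeasurePreserving.integral_comp_of_measurable {α β : Type*} [MeasurableSpace α]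
    [MeasurableSpace β] {μ : Measure α} {ν : Measure β} {f : α → β}
    (hf : MeasurePreserving f μ ν) {g : β → ℝ} (hg : Measurable g) :
    ∫ x, g (f x) ∂μ = ∫ y, g y ∂ν := by
  rw [← hf.map_eq, integral_map hf.measurable.aemeasurable hg.aestronglyMeasurable]

lemma integral_loss_mono {X A V : Type*} [MeasurableSpace X] [MeasurableSpace A]
    [MeasurableSpace V] [Preorder A] {ℓ : A → V → ℝ} {c : ℝ}
    (hℓ_meas : Measurable fun p : A × V => ℓ p.1 p.2)
    (hℓ_nonneg : ∀ a v, 0 ≤ ℓ a v) (hℓ_bdd : ∀ a v, ℓ a v ≤ c)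
    (hℓ_mono : ∀ a₁ a₂, a₁ ≤ a₂ → ∀ v, ℓ a₁ v ≤ ℓ a₂ v)
    (μ : Measure X) [IsFiniteMeasure μ] {a b : X → A} {v : X → V}
    (hb : Measurable b) (hv : Measurable v) (hab : ∀ x, a x ≤ b x) :
    ∫ x, ℓ (a x) (v x) ∂μ ≤ ∫ x, ℓ (b x) (v x) ∂μ :=
  integral_mono_of_nonneg (.of_forall fun _ => hℓ_nonneg _ _)
    (.of_bound (hℓ_meas.comp (hb.prodMk hv)).aestronglyMeasurable c (.of_forall fun _ => by
      rw [Real.norm_eq_abs, abs_of_nonneg (hℓ_nonneg _ _)]; exact hℓ_bdd _ _))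
    (.of_forall fun x => hℓ_mono _ _ (hab x) _)

theorem gespi_one_sided_risk_bound_general
    {Z V A : Type*} [MeasurableSpace Z] [MeasurableSpace V] [MeasurableSpace A]
    [SemilatticeInf A]
    (ℓ : A → V → ℝ) (c : ℝ) (hc : 0 < c)
    (hℓ_meas : Measurable fun p : A × V => ℓ p.1 p.2)
    (hℓ_nonneg : ∀ a v, 0 ≤ ℓ a v) (hℓ_bdd : ∀ a v, ℓ a v ≤ c)
    (hℓ_mono : ∀ a₁ a₂, a₁ ≤ a₂ → ∀ v, ℓ a₁ v ≤ ℓ a₂ v)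
    (Pfam : Set (Measure Z)) (hPfam : ∀ P ∈ Pfam, IsProbabilityMeasure P)
    (T : Measure Z → Measure V) (hT : ∀ P ∈ Pfam, IsProbabilityMeasure (T P))
    (Alg : ℝ → ∀ m : ℕ, (Fin m → Z) → A)
    (hAlg_meas : ∀ β m, Measurable (Alg β m))
    (α ε : ℝ)
    (hGuar : ∀ β, (β = α ∨ β = α + ε) → ∀ P ∈ Pfam, ∀ m : ℕ,
      ∫ w : (Fin m → Z) × V, ℓ (Alg β m w.1) w.2
        ∂((Measure.pi fun _ : Fin m => P).prod (T P)) ≤ β) :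
    ∀ P ∈ Pfam, ∀ Q ∈ Pfam, ∀ n N : ℕ,
      ∫ w : (Fin n → Z) × (Fin N → Z) × V,
          ℓ (Alg α (n + N) (Fin.append w.1 w.2.1) ⊓ Alg (α + ε) n w.1) w.2.2
        ∂((Measure.pi fun _ : Fin n => P).prod
            ((Measure.pi fun _ : Fin N => Q).prod (T P)))
      ≤ α + min ε (c * tvDist
          (Measure.map (fun w : (Fin n → Z) × (Fin N → Z) × V =>
              ℓ (Alg α (n + N) (Fin.append w.1 w.2.1)) w.2.2)
            ((Measure.pi fun _ : Fin n => P).prod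
              ((Measure.pi fun _ : Fin N => Q).prod (T P))))
          (Measure.map (fun w : (Fin n → Z) × (Fin N → Z) × V =>
              ℓ (Alg α (n + N) (Fin.append w.1 w.2.1)) w.2.2)
            ((Measure.pi fun _ : Fin n => Q).prod
              ((Measure.pi fun _ : Fin N => Q).prod (T Q))))) := by
  intro P hP Q hQ n N
  have := hPfam P hP; have := hPfam Q hQ; have := hT P hP; have := hT Q hQ
  set μP := (Measure.pi fun _ : Fin n => P).prod ((Measure.pi fun _ : Fin N => Q).prod (T P))
  set μQ := (Measure.pi fun _ : Fin n => Q).prod ((Measure.pi fun _ : Fin N => Q).prod (T Q))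
  set pooled := fun w : (Fin n → Z) × (Fin N → Z) × V =>
    ℓ (Alg α (n + N) (Fin.append w.1 w.2.1)) w.2.2
  have hAlg_pooled : Measurable fun w : (Fin n → Z) × (Fin N → Z) × V =>
      Alg α (n + N) (Fin.append w.1 w.2.1) :=
    (hAlg_meas _ _).comp (measurable_finAppend.comp (measurable_fst.prodMk measurable_snd.fst))
  have hrisk_clean : ∫ w, ℓ (Alg (α + ε) n w.1) w.2.2 ∂μP ≤ α + ε := by
    rw [(measurePreserving_fst_snd_snd _ _ _).integral_comp_of_measurable
      (g := fun p : (Fin n → Z) × V => ℓ (Alg (α + ε) n p.1) p.2)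
      (hℓ_meas.comp (((hAlg_meas _ _).comp measurable_fst).prodMk measurable_snd))]
    exact hGuar _ (.inr rfl) P hP n
  have hrisk_pooled : ∫ w, pooled w ∂μQ ≤ α := by
    rw [(measurePreserving_finAppend_prod Q (T Q)).integral_comp_of_measurable
      (g := fun p : (Fin (n + N) → Z) × V => ℓ (Alg α (n + N) p.1) p.2)
      (hℓ_meas.comp (((hAlg_meas _ _).comp measurable_fst).prodMk measurable_snd))]
    exact hGuar _ (.inl rfl) Q hQ (n + N)
  rw [← min_add_add_left]
  refine le_min ?_ ?_
  · exact (integral_loss_mono hℓ_meas hℓ_nonneg hℓ_bdd hℓ_mono μP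
      ((hAlg_meas _ _).comp measurable_fst) measurable_snd.snd fun _ => inf_le_right).trans
      hrisk_clean
  · calc _ ≤ ∫ w, pooled w ∂μP := integral_loss_mono hℓ_meas hℓ_nonneg hℓ_bdd hℓ_mono μP
          hAlg_pooled measurable_snd.snd fun _ => inf_le_left
      _ ≤ ∫ w, pooled w ∂μQ + c * tvDist (μP.map pooled) (μQ.map pooled) :=
          integral_le_integral_add_mul_tvDist_map μP μQ
            (hℓ_meas.comp (hAlg_pooled.prodMk measurable_snd.snd)) hc.le
            (fun _ => hℓ_nonneg _ _) fun _ => hℓ_bdd _ _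
      _ ≤ α + c * tvDist (μP.map pooled) (μQ.map pooled) := by gcongr

/-- **GESPI risk bound (Theorem 1 / `thm:main`).**

Given an action space `A` with binary meets, a loss `ℓ` bounded by `c` and
monotone in the action, a family of algorithms `Alg β` monotone in the level,
satisfying the level-`β` risk guarantee for `β = α` and `β = α + ε`, the
GESPI procedure `Alg α (Dₙ ∪ D̃_N) ⊓ Alg (α+ε) Dₙ` has risk at most
`α + min {ε, c · d_ℓ(P, Q)}` for all `P, Q ∈ Pfam` and all sample sizes. -/
theorem gespi_one_sided_risk_bound
    {Z V A : Type*} [MeasurableSpace Z] [MeasurableSpace V] [MeasurableSpace A]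
    [SemilatticeInf A]
    (ℓ : A → V → ℝ) (c : ℝ) (hc : 0 < c)
    (hℓ_meas : Measurable fun p : A × V => ℓ p.1 p.2)
    (hℓ_nonneg : ∀ a v, 0 ≤ ℓ a v) (hℓ_bdd : ∀ a v, ℓ a v ≤ c)
    (hℓ_mono : ∀ a₁ a₂, a₁ ≤ a₂ → ∀ v, ℓ a₁ v ≤ ℓ a₂ v)
    (Pfam : Set (Measure Z)) (hPfam : ∀ P ∈ Pfam, IsProbabilityMeasure P)
    (T : Measure Z → Measure V) (hT : ∀ P ∈ Pfam, IsProbabilityMeasure (T P))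
    (Alg : ℝ → ∀ m : ℕ, (Fin m → Z) → A)
    (hAlg_meas : ∀ β m, Measurable (Alg β m))
    (hAlg_mono : ∀ β₁ β₂, β₁ ≤ β₂ → ∀ (m : ℕ) (z : Fin m → Z), Alg β₁ m z ≤ Alg β₂ m z)
    (α ε : ℝ) (hα : 0 < α) (hε : 0 < ε)
    (hGuar : ∀ β, (β = α ∨ β = α + ε) → ∀ P ∈ Pfam, ∀ m : ℕ,
      ∫ w : (Fin m → Z) × V, ℓ (Alg β m w.1) w.2
        ∂((Measure.pi fun _ : Fin m => P).prod (T P)) ≤ β) :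
    ∀ P ∈ Pfam, ∀ Q ∈ Pfam, ∀ n N : ℕ,
      ∫ w : (Fin n → Z) × (Fin N → Z) × V,
          ℓ (Alg α (n + N) (Fin.append w.1 w.2.1) ⊓ Alg (α + ε) n w.1) w.2.2
        ∂((Measure.pi fun _ : Fin n => P).prod
            ((Measure.pi fun _ : Fin N => Q).prod (T P)))
      ≤ α + min ε (c * tvDist
          (Measure.map (fun w : (Fin n → Z) × (Fin N → Z) × V =>
              ℓ (Alg α (n + N) (Fin.append w.1 w.2.1)) w.2.2)
            ((Measure.pi fun _ : Fin n => P).prod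
              ((Measure.pi fun _ : Fin N => Q).prod (T P))))
          (Measure.map (fun w : (Fin n → Z) × (Fin N → Z) × V =>
              ℓ (Alg α (n + N) (Fin.append w.1 w.2.1)) w.2.2)
            ((Measure.pi fun _ : Fin n => Q).prod
              ((Measure.pi fun _ : Fin N => Q).prod (T Q))))) :=
  gespi_one_sided_risk_bound_general ℓ c hc hℓ_meas hℓ_nonneg hℓ_bdd hℓ_mono Pfam hPfam T hT Alg
    hAlg_meas α ε hGuar
end

section
/- For every n ∈ ℕ, every p ∈ [0,1] and every q ∈ (0,1), the total variation distance between the Binomial(n, p) and Binomial(n, q) distributions satisfies d_TV(Binomial(n, p), Binomial(n, q)) ≤ √(n/(2q(1−q)))·|p − q|. -/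
open MeasureTheory

/-- The `Binomial(n, p)` distribution as a measure on `ℕ`: the law of the
number of successes among `n` i.i.d. `Bernoulli(p)` trials, i.e., it puts mass
`C(n,k) pᵏ (1−p)^{n−k}` on each `k`. -/
noncomputable def binomMeasure (n : ℕ) (p : ℝ) : Measure ℕ :=
  Measure.sum fun k : ℕ =>
    ENNReal.ofReal ((n.choose k : ℝ) * p ^ k * (1 - p) ^ (n - k)) • Measure.dirac k

/-
Pinsker's inequality bounds the total variation distance by `√(KL / 2)`, and the Kullback–Leibler
divergence is additive over independent trials: `KL(Bin(n,p) ‖ Bin(n,q)) = n · KL(Ber p ‖ Ber q)`.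
Finally `KL(Ber p ‖ Ber q) ≤ χ²(Ber p ‖ Ber q) = (p - q)² / (q(1 - q))` by `log x ≤ x - 1`.

Pinsker's inequality for an event and its complement reduces, by the log-sum inequality, to the
two-point case, a one-variable calculus fact: for fixed `a`, the function
`b ↦ KL(Ber a ‖ Ber b) - 2(a - b)²` has derivative `(b - a)(1 - 2b)² / (b(1 - b))`, so it is
minimal, and zero, at `b = a`.
-/

open Real Finset Set

lemma mul_log_div_eq_sub {x y : ℝ} (hy : y ≠ 0) : x * log (x / y) = x * log x - x * log y := by
  rcases eq_or_ne x 0 with rfl | hx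
  · simp
  · rw [log_div hx hy, mul_sub]

lemma mul_log_div_le {x y : ℝ} (hx : 0 ≤ x) (hy : 0 < y) : x * log (x / y) ≤ x * (x / y - 1) := by
  rcases hx.eq_or_lt with rfl | hx
  · simp
  · exact mul_le_mul_of_nonneg_left (log_le_sub_one_of_pos (by positivity)) hx.le

lemma mul_log_add_sub_mul_le_mul_log_div {x y c : ℝ} (hx : 0 ≤ x) (hy : 0 < y) (hc : 0 < c) :
    x * log c + x - y * c ≤ x * log (x / y) := by
  rcases hx.eq_or_lt with rfl | hx
  · simp only [zero_mul, zero_add, zero_sub, neg_nonpos]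
    positivity
  have key := one_sub_inv_le_log_of_pos (show 0 < x / (y * c) by positivity)
  rw [log_div hx.ne' (by positivity), log_mul hy.ne' hc.ne', inv_div] at key
  rw [log_div hx.ne' hy.ne']
  have := mul_le_mul_of_nonneg_left key hx.le
  rw [mul_sub, mul_one, mul_div_cancel₀ _ hx.ne'] at this
  linarith

theorem sum_mul_log_div_sum_le {ι : Type*} (s : Finset ι) {f g : ι → ℝ}
    (hf : ∀ i ∈ s, 0 ≤ f i) (hg : ∀ i ∈ s, 0 < g i) :
    (∑ i ∈ s, f i) * log ((∑ i ∈ s, f i) / ∑ i ∈ s, g i) ≤ ∑ i ∈ s, f i * log (f i / g i) := by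
  rcases s.eq_empty_or_nonempty with rfl | hs
  · simp
  set F := ∑ i ∈ s, f i
  set G := ∑ i ∈ s, g i
  have hG : 0 < G := sum_pos hg hs
  rcases (sum_nonneg hf : 0 ≤ F).eq_or_lt with hF | hF
  · have hf0 : ∀ i ∈ s, f i = 0 := (sum_eq_zero_iff_of_nonneg hf).mp hF.symm
    rw [show F = 0 from hF.symm, zero_mul, sum_eq_zero fun i hi => by rw [hf0 i hi, zero_mul]]
  calc F * log (F / G) = ∑ i ∈ s, (f i * log (F / G) + f i - g i * (F / G)) := by
        rw [sum_sub_distrib, sum_add_distrib, ← sum_mul, ← sum_mul]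
        field_simp
        ring
    _ ≤ _ := sum_le_sum fun i hi =>
        mul_log_add_sub_mul_le_mul_log_div (hf i hi) (hg i hi) (by positivity)

noncomputable def bernoulliKL (a b : ℝ) : ℝ := a * log (a / b) + (1 - a) * log ((1 - a) / (1 - b))

lemma bernoulliKL_le_sq_div {p q : ℝ} (hp : p ∈ Icc (0 : ℝ) 1) (hq : q ∈ Ioo (0 : ℝ) 1) :
    bernoulliKL p q ≤ (p - q) ^ 2 / (q * (1 - q)) := by
  obtain ⟨hq0, hq1⟩ := hq
  have h1q : 0 < 1 - q := by linarith
  calc bernoulliKL p q ≤ p * (p / q - 1) + (1 - p) * ((1 - p) / (1 - q) - 1) :=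
        add_le_add (mul_log_div_le hp.1 hq0) (mul_log_div_le (by linarith [hp.2]) h1q)
    _ = (p - q) ^ 2 / (q * (1 - q)) := by field_simp; ring

lemma continuousAt_const_mul_log_self (c : ℝ) : ContinuousAt (fun y => c * log y) c := by
  rcases eq_or_ne c 0 with rfl | hc
  · simpa using continuousAt_const
  · exact continuousAt_const.mul (continuousAt_log hc)

theorem two_mul_sq_sub_le_bernoulliKL {a b : ℝ} (ha : a ∈ Icc (0 : ℝ) 1) (hb : b ∈ Ioo (0 : ℝ) 1) :
    2 * (a - b) ^ 2 ≤ bernoulliKL a b := by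
  obtain ⟨ha0, ha1⟩ := ha
  set G : ℝ → ℝ := fun x => -(a * log x) - (1 - a) * log (1 - x) - 2 * (a - x) ^ 2 with hG
  have hderiv : ∀ x ∈ Ioo (0 : ℝ) 1,
      HasDerivAt G ((x - a) * ((1 - 2 * x) ^ 2 / (x * (1 - x)))) x := by
    rintro x ⟨hx0, hx1⟩
    have h1x : 1 - x ≠ 0 := by linarith
    have := (((hasDerivAt_log hx0.ne').const_mul a).neg.sub
      ((((hasDerivAt_id x).const_sub 1).log h1x).const_mul (1 - a))).sub
      ((((hasDerivAt_id x).const_sub a).pow 2).const_mul 2)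
    refine this.congr_deriv ?_
    simp only [id, Nat.cast_ofNat]
    field_simp
    ring
  have hfactor : ∀ x ∈ Ioo (0 : ℝ) 1, 0 ≤ (1 - 2 * x) ^ 2 / (x * (1 - x)) := fun x hx =>
    div_nonneg (sq_nonneg _) (mul_pos hx.1 (sub_pos.2 hx.2)).le
  have hdiff : DifferentiableOn ℝ G (Ioo 0 1) := fun x hx =>
    (hderiv x hx).differentiableAt.differentiableWithinAt
  have hcont : ContinuousAt G a :=
    ((continuousAt_const_mul_log_self a).neg.sub
      ((continuousAt_const_mul_log_self (1 - a)).comp (continuousAt_const.sub continuousAt_id))).sub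
      (by fun_prop)
  have hmin : IsMinOn G (Ioo 0 1) a := by
    refine isMinOn_Ioo_of_deriv hcont (hdiff.mono (Ioo_subset_Ioo_right ha1))
      (hdiff.mono (Ioo_subset_Ioo_left ha0)) (fun x hx => ?_) (fun x hx => ?_)
    · rw [(hderiv x ⟨hx.1, hx.2.trans_le ha1⟩).deriv]
      exact mul_nonpos_of_nonpos_of_nonneg (by linarith [hx.2])
        (hfactor x ⟨hx.1, hx.2.trans_le ha1⟩)
    · rw [(hderiv x ⟨ha0.trans_lt hx.1, hx.2⟩).deriv]
      exact mul_nonneg (by linarith [hx.1]) (hfactor x ⟨ha0.trans_lt hx.1, hx.2⟩)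
  have := hmin hb
  simp only [mem_ofPred_eq, hG] at this
  rw [bernoulliKL, mul_log_div_eq_sub hb.1.ne', mul_log_div_eq_sub (by linarith [hb.2])]
  linarith

section FinitePinsker

variable {ι : Type*} {S T : Finset ι} {f g : ι → ℝ}

lemma bernoulliKL_sum_le_sum_mul_log_div [DecidableEq ι] (hT : T ⊆ S) (hf : ∀ i ∈ S, 0 ≤ f i)
    (hg : ∀ i ∈ S, 0 < g i) (hf1 : ∑ i ∈ S, f i = 1) (hg1 : ∑ i ∈ S, g i = 1) :
    bernoulliKL (∑ i ∈ T, f i) (∑ i ∈ T, g i) ≤ ∑ i ∈ S, f i * log (f i / g i) := by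
  have hTc : S \ T ⊆ S := sdiff_subset
  calc bernoulliKL (∑ i ∈ T, f i) (∑ i ∈ T, g i)
      = (∑ i ∈ T, f i) * log ((∑ i ∈ T, f i) / ∑ i ∈ T, g i)
        + (∑ i ∈ S \ T, f i) * log ((∑ i ∈ S \ T, f i) / ∑ i ∈ S \ T, g i) := by
        rw [bernoulliKL, sum_sdiff_eq_sub hT, sum_sdiff_eq_sub hT, hf1, hg1]
    _ ≤ ∑ i ∈ T, f i * log (f i / g i) + ∑ i ∈ S \ T, f i * log (f i / g i) :=
        add_le_add (sum_mul_log_div_sum_le T (fun i hi => hf i (hT hi)) fun i hi => hg i (hT hi))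
          (sum_mul_log_div_sum_le _ (fun i hi => hf i (hTc hi)) fun i hi => hg i (hTc hi))
    _ = ∑ i ∈ S, f i * log (f i / g i) := by rw [add_comm, sum_sdiff hT]

theorem two_mul_sq_sum_sub_le_sum_mul_log_div (hT : T ⊆ S) (hf : ∀ i ∈ S, 0 ≤ f i)
    (hg : ∀ i ∈ S, 0 < g i) (hf1 : ∑ i ∈ S, f i = 1) (hg1 : ∑ i ∈ S, g i = 1) :
    2 * (∑ i ∈ T, f i - ∑ i ∈ T, g i) ^ 2 ≤ ∑ i ∈ S, f i * log (f i / g i) := by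
  classical
  have hKL := bernoulliKL_sum_le_sum_mul_log_div hT hf hg hf1 hg1
  rcases T.eq_empty_or_nonempty with rfl | hTne
  · simpa [bernoulliKL] using hKL
  rcases (S \ T).eq_empty_or_nonempty with hST | hSTne
  · obtain rfl : T = S := hT.antisymm (sdiff_eq_empty_iff_subset.mp hST)
    simpa [bernoulliKL, hf1, hg1] using hKL
  have hb0 : 0 < ∑ i ∈ T, g i := sum_pos (fun i hi => hg i (hT hi)) hTne
  have hb1 : 0 < ∑ i ∈ S \ T, g i := sum_pos (fun i hi => hg i (sdiff_subset hi)) hSTne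
  have ha0 : 0 ≤ ∑ i ∈ T, f i := sum_nonneg fun i hi => hf i (hT hi)
  have ha1 : 0 ≤ ∑ i ∈ S \ T, f i := sum_nonneg fun i hi => hf i (sdiff_subset hi)
  rw [sum_sdiff_eq_sub hT] at hb1 ha1
  exact (two_mul_sq_sub_le_bernoulliKL ⟨ha0, by linarith⟩ ⟨hb0, by linarith⟩).trans hKL

end FinitePinsker

section WeightMeasure

variable {α : Type*} [MeasurableSpace α]

noncomputable def weightMeasure (w : α → ℝ) : Measure α :=
  Measure.sum fun x => ENNReal.ofReal (w x) • Measure.dirac x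

lemma toReal_weightMeasure_apply {w : α → ℝ} {S : Finset α} (hw : ∀ x ∈ S, 0 ≤ w x)
    (hS : ∀ x ∉ S, w x = 0) {s : Set α} [DecidablePred (· ∈ s)] (hs : MeasurableSet s) :
    (weightMeasure w s).toReal = ∑ x ∈ S with x ∈ s, w x := by
  rw [weightMeasure, Measure.sum_apply _ hs]
  simp only [Measure.smul_apply, Measure.dirac_apply' _ hs, smul_eq_mul]
  rw [tsum_eq_sum (s := S) fun x hx => by simp [hS x hx], ENNReal.toReal_sum, sum_filter]
  · exact sum_congr rfl fun x hx => by by_cases hxs : x ∈ s <;> simp [hxs, hw x hx]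
  · intro x _
    by_cases hxs : x ∈ s <;> simp [hxs]

theorem tvDist_weightMeasure_le_sqrt {f g : α → ℝ} {S : Finset α} (hf : ∀ x ∈ S, 0 ≤ f x)
    (hg : ∀ x ∈ S, 0 < g x) (hfS : ∀ x ∉ S, f x = 0) (hgS : ∀ x ∉ S, g x = 0)
    (hf1 : ∑ x ∈ S, f x = 1) (hg1 : ∑ x ∈ S, g x = 1) :
    tvDist (weightMeasure f) (weightMeasure g) ≤ √((∑ x ∈ S, f x * log (f x / g x)) / 2) := by
  classical
  have : Nonempty { s : Set α // MeasurableSet s } := ⟨⟨∅, .empty⟩⟩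
  refine ciSup_le fun ⟨s, hs⟩ => ?_
  rw [toReal_weightMeasure_apply hf hfS hs,
    toReal_weightMeasure_apply (fun x hx => (hg x hx).le) hgS hs]
  refine abs_le_sqrt ?_
  linarith [two_mul_sq_sum_sub_le_sum_mul_log_div (filter_subset (· ∈ s) S) hf hg hf1 hg1]

end WeightMeasure

section Bernstein

open Polynomial

variable {n k : ℕ} {p q : ℝ}

lemma bernsteinPolynomial_eval (n k : ℕ) (p : ℝ) :
    (bernsteinPolynomial ℝ n k).eval p = n.choose k * p ^ k * (1 - p) ^ (n - k) := by
  simp [bernsteinPolynomial]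

lemma bernsteinPolynomial_eval_nonneg (hp : p ∈ Icc (0 : ℝ) 1) :
    0 ≤ (bernsteinPolynomial ℝ n k).eval p := by
  obtain ⟨hp0, hp1⟩ := hp
  have : 0 ≤ 1 - p := sub_nonneg.2 hp1
  rw [bernsteinPolynomial_eval]
  positivity

lemma bernsteinPolynomial_eval_pos (hq : q ∈ Ioo (0 : ℝ) 1) (hk : k ≤ n) :
    0 < (bernsteinPolynomial ℝ n k).eval q := by
  obtain ⟨hq0, hq1⟩ := hq
  have : 0 < 1 - q := sub_pos.2 hq1
  have : (0 : ℝ) < n.choose k := by exact_mod_cast n.choose_pos hk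
  rw [bernsteinPolynomial_eval]
  positivity

lemma sum_bernsteinPolynomial_eval (n : ℕ) (p : ℝ) :
    ∑ k ∈ range (n + 1), (bernsteinPolynomial ℝ n k).eval p = 1 := by
  simpa [eval_finsetSum] using congrArg (eval p) (bernsteinPolynomial.sum ℝ n)

lemma sum_mul_bernsteinPolynomial_eval (n : ℕ) (p : ℝ) :
    ∑ k ∈ range (n + 1), k * (bernsteinPolynomial ℝ n k).eval p = n * p := by
  simpa [eval_finsetSum, nsmul_eq_mul] using congrArg (eval p) (bernsteinPolynomial.sum_smul ℝ n)

lemma mul_log_bernsteinPolynomial_eval_div (hq : q ∈ Ioo (0 : ℝ) 1) (hk : k ≤ n) :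
    (bernsteinPolynomial ℝ n k).eval p * log ((bernsteinPolynomial ℝ n k).eval p /
        (bernsteinPolynomial ℝ n k).eval q) =
      (bernsteinPolynomial ℝ n k).eval p *
        (k * log (p / q) + (n - k) * log ((1 - p) / (1 - q))) := by
  rcases eq_or_ne ((bernsteinPolynomial ℝ n k).eval p) 0 with h | h
  · simp [h]
  congr 1
  have hq0 : q ≠ 0 := hq.1.ne'
  have hq1 : 1 - q ≠ 0 := (sub_pos.2 hq.2).ne'
  simp only [bernsteinPolynomial_eval] at h ⊢
  obtain ⟨⟨hc, hpk⟩, hpnk⟩ := mul_ne_zero_iff.mp h |>.imp_left mul_ne_zero_iff.mp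
  have hratio : n.choose k * p ^ k * (1 - p) ^ (n - k) / (n.choose k * q ^ k * (1 - q) ^ (n - k)) =
      (p / q) ^ k * ((1 - p) / (1 - q)) ^ (n - k) := by
    rw [div_pow, div_pow]
    field_simp
  rw [hratio, log_mul, log_pow, log_pow, Nat.cast_sub hk]
  · rw [div_pow]; exact div_ne_zero hpk (pow_ne_zero _ hq0)
  · rw [div_pow]; exact div_ne_zero hpnk (pow_ne_zero _ hq1)

theorem sum_mul_log_bernsteinPolynomial_eval_div (hq : q ∈ Ioo (0 : ℝ) 1) :
    ∑ k ∈ range (n + 1), (bernsteinPolynomial ℝ n k).eval p *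
        log ((bernsteinPolynomial ℝ n k).eval p / (bernsteinPolynomial ℝ n k).eval q) =
      n * bernoulliKL p q := by
  set L₁ := log (p / q)
  set L₂ := log ((1 - p) / (1 - q))
  calc _ = ∑ k ∈ range (n + 1), ((k * (bernsteinPolynomial ℝ n k).eval p) * L₁
        + (n * (bernsteinPolynomial ℝ n k).eval p) * L₂
        - (k * (bernsteinPolynomial ℝ n k).eval p) * L₂) := by
        refine sum_congr rfl fun k hk => ?_
        rw [mul_log_bernsteinPolynomial_eval_div hq (mem_range_succ_iff.mp hk)]
        ring
    _ = n * bernoulliKL p q := by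
        rw [sum_sub_distrib, sum_add_distrib, ← sum_mul, ← sum_mul, ← sum_mul, ← mul_sum,
          sum_mul_bernsteinPolynomial_eval, sum_bernsteinPolynomial_eval, bernoulliKL]
        ring

lemma binomMeasure_eq_weightMeasure (n : ℕ) (p : ℝ) :
    binomMeasure n p = weightMeasure fun k => (bernsteinPolynomial ℝ n k).eval p := by
  simp only [binomMeasure, weightMeasure, bernsteinPolynomial_eval]

end Bernstein

/-- **Total variation bound between binomial distributions.**

For every `n`, `p ∈ [0,1]` and `q ∈ (0,1)`,
`d_TV(Binomial(n,p), Binomial(n,q)) ≤ √(n/(2q(1−q)))·|p − q|`. -/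
theorem binomial_tv_bound
    (n : ℕ) (p q : ℝ) (hp : p ∈ Set.Icc (0 : ℝ) 1) (hq : q ∈ Set.Ioo (0 : ℝ) 1) :
    tvDist (binomMeasure n p) (binomMeasure n q)
      ≤ Real.sqrt ((n : ℝ) / (2 * q * (1 - q))) * |p - q| := by
  have hvanish (r : ℝ) (k : ℕ) (hk : k ∉ range (n + 1)) :
      (bernsteinPolynomial ℝ n k).eval r = 0 := by
    rw [bernsteinPolynomial.eq_zero_of_lt ℝ (by simpa using hk), Polynomial.eval_zero]
  rw [binomMeasure_eq_weightMeasure, binomMeasure_eq_weightMeasure]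
  calc _ ≤ √((∑ k ∈ range (n + 1), (bernsteinPolynomial ℝ n k).eval p *
          log ((bernsteinPolynomial ℝ n k).eval p / (bernsteinPolynomial ℝ n k).eval q)) / 2) :=
        tvDist_weightMeasure_le_sqrt (fun _ _ => bernsteinPolynomial_eval_nonneg hp)
          (fun _ hk => bernsteinPolynomial_eval_pos hq (mem_range_succ_iff.mp hk))
          (hvanish p) (hvanish q) (sum_bernsteinPolynomial_eval n p)
          (sum_bernsteinPolynomial_eval n q)
    _ = √(n * bernoulliKL p q / 2) := by rw [sum_mul_log_bernsteinPolynomial_eval_div hq]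
    _ ≤ √(n / (2 * q * (1 - q)) * (p - q) ^ 2) := by
        rw [show n / (2 * q * (1 - q)) * (p - q) ^ 2 = n * ((p - q) ^ 2 / (q * (1 - q))) / 2 by
          field_simp]
        gcongr
        exact bernoulliKL_le_sq_div hp hq
    _ = √(n / (2 * q * (1 - q))) * |p - q| := by rw [sqrt_mul' _ (sq_nonneg _), sqrt_sq_eq_abs]
end

section
/- Let S₁, …, S_{n+1} be i.i.d. real-valued random variables whose common distribution is atomless, and define the rank R = Σ_{i=1}^{n+1} 1{S_i ≤ S_{n+1}}. Then R is uniformly distributed on {1, 2, …, n+1}, and R is independent of the order statistics vector (S_{(1)}, …, S_{(n+1)}). -/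
/-!
Off the null set of samples with ties, `ω` determines a unique permutation `σ = Tuple.sort ω`
making `ω ∘ σ` strictly increasing; the rank of the last point is `σ⁻¹ (last) + 1` and the
order statistics are `ω ∘ σ`. As `ω ↦ ω ∘ σ` preserves the i.i.d. law, the probability that
the sorting permutation is `σ` and the sorted sample lies in `B` does not depend on `σ`. So the
sorting permutation is uniform and independent of the sorted sample, and `σ⁻¹ (last)` is
uniform because every position is taken by the same number of permutations.
-/

open MeasureTheory

/-- The `r`-th order statistic (`r`-th smallest value, `1`-indexed) of the
tuple `S` of `m` real numbers. -/
noncomputable def orderStat {m : ℕ} (r : ℕ) (S : Fin m → ℝ) : ℝ :=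
  ((List.ofFn S).insertionSort (· ≤ ·)).getD (r - 1) 0

open Finset
open scoped ENNReal

namespace Tuple

variable {n : ℕ} {α : Type*} [LinearOrder α]

theorem sort_symm_le_sort_symm_iff {f : Fin n → α} {i j : Fin n} :
    (sort f).symm i ≤ (sort f).symm j ↔ toLex (f i, i) ≤ toLex (f j, j) := by
  simp only [sort, Equiv.symm_trans_apply, Equiv.symm_symm]
  exact (graphEquiv₂ f).symm.le_iff_le

theorem card_filter_le_apply_last (f : Fin (n + 1) → α) :
    #{i | f i ≤ f (Fin.last n)} = (sort f).symm (Fin.last n) + 1 := by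
  -- ties with the last point are sorted before it, as `sort` breaks ties by index
  have hiff : ∀ i, f i ≤ f (Fin.last n) ↔ (sort f).symm i ≤ (sort f).symm (Fin.last n) := by
    intro i
    rw [sort_symm_le_sort_symm_iff, Prod.Lex.toLex_le_toLex, le_iff_lt_or_eq]
    simp [Fin.le_last]
  simp_rw [hiff]
  rw [← Fin.card_Iic, ← card_map (sort f).symm.toEmbedding]
  congr 1
  ext i
  simp

theorem sort_eq_iff_strictMono {f : Fin n → α} {σ : Equiv.Perm (Fin n)}
    (hf : Function.Injective f) : sort f = σ ↔ StrictMono (f ∘ σ) := by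
  rw [eq_comm, eq_sort_iff]
  refine ⟨fun h => h.1.strictMono_of_injective (hf.comp σ.injective), fun h => ⟨h.monotone, ?_⟩⟩
  intro i j hij hfij
  exact absurd (σ.injective (hf hfij)) hij.ne

end Tuple

theorem orderStat_succ {m : ℕ} (ω : Fin m → ℝ) (r : Fin m) :
    orderStat (r + 1) ω = ω (Tuple.sort ω r) := by
  have hsorted : (List.ofFn ω).insertionSort (· ≤ ·) = List.ofFn (ω ∘ Tuple.sort ω) :=
    ((List.perm_insertionSort _ _).trans ((Tuple.sort ω).ofFn_comp_perm ω).symm)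
      |>.eq_of_pairwise' (List.pairwise_insertionSort _ _)
        (Tuple.monotone_sort ω).sortedLE_ofFn.pairwise
  simp [orderStat, hsorted]

theorem Equiv.Perm.card_mul_card_filter_symm_apply_eq {α : Type*} [Fintype α] [DecidableEq α]
    (a b : α) :
    Fintype.card α * #{σ : Perm α | σ.symm a = b} = (Fintype.card α).factorial := by
  have hfiber : ∀ c, #{σ : Perm α | σ.symm a = c} = #{σ : Perm α | σ.symm a = b} :=
    fun c => card_equiv (Equiv.mulRight (swap c b)) fun σ => by
      simp [Perm.mul_def, swap_apply_eq_iff]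
  calc Fintype.card α * #{σ : Perm α | σ.symm a = b}
      = ∑ c, #{σ : Perm α | σ.symm a = c} := by simp [hfiber]
    _ = #(univ : Finset (Perm α)) := (card_eq_sum_card_fiberwise fun _ _ => mem_univ _).symm
    _ = (Fintype.card α).factorial := by rw [card_univ, Fintype.card_perm]

theorem Equiv.Perm.card_filter_symm_apply_eq_div_card_perm {α : Type*} [Fintype α]
    [DecidableEq α] (a b : α) :
    (#{σ : Perm α | σ.symm a = b} : ℝ≥0∞) / Fintype.card (Perm α)
      = (Fintype.card α : ℝ≥0∞)⁻¹ := by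
  have hcount := card_mul_card_filter_symm_apply_eq a b
  have hc : (#{σ : Perm α | σ.symm a = b} : ℝ≥0∞) ≠ 0 :=
    Nat.cast_ne_zero.2 (right_ne_zero_of_mul (hcount ▸ Nat.factorial_ne_zero _))
  rw [Fintype.card_perm, ← hcount, Nat.cast_mul, ENNReal.div_eq_inv_mul,
    ENNReal.mul_inv (.inr (ENNReal.natCast_ne_top _)) (.inl (ENNReal.natCast_ne_top _)),
    mul_assoc, ENNReal.inv_mul_cancel hc (ENNReal.natCast_ne_top _), mul_one]

section UniformLabel

variable {Ω G β : Type*} [MeasurableSpace Ω] [MeasurableSpace β]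
  {P : Measure Ω} {τ : Ω → G} {Y : Ω → β} {ν : Set β → ℝ≥0∞}
  (hmeas : ∀ σ B, MeasurableSet B → NullMeasurableSet ({ω | τ ω = σ} ∩ Y ⁻¹' B) P)
  (hν : ∀ σ B, MeasurableSet B → P ({ω | τ ω = σ} ∩ Y ⁻¹' B) = ν B)
include hmeas hν

theorem measure_preimage_inter_preimage_eq_card_mul (A : Finset G) {B : Set β}
    (hB : MeasurableSet B) : P (τ ⁻¹' A ∩ Y ⁻¹' B) = #A * ν B := by
  have hunion : τ ⁻¹' A ∩ Y ⁻¹' B = ⋃ σ ∈ A, {ω | τ ω = σ} ∩ Y ⁻¹' B := by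
    ext ω
    simp
  have hdisj : Set.PairwiseDisjoint (A : Set G) fun σ => {ω | τ ω = σ} ∩ Y ⁻¹' B :=
    fun σ _ σ' _ hne => Set.disjoint_left.2 fun ω h h' => hne (h.1.symm.trans h'.1)
  rw [hunion, measure_biUnion_finset₀ hdisj.aedisjoint fun σ _ => hmeas σ B hB]
  simp [hν _ _ hB]

variable [Fintype G] [IsProbabilityMeasure P]

theorem card_mul_apply_univ_eq_one : Fintype.card G * ν Set.univ = 1 := by
  simpa using (measure_preimage_inter_preimage_eq_card_mul hmeas hν univ .univ).symm

theorem measure_preimage_eq_card_div (A : Finset G) :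
    P (τ ⁻¹' A) = #A / Fintype.card G := by
  have hunif : ν Set.univ = (Fintype.card G : ℝ≥0∞)⁻¹ :=
    ENNReal.eq_inv_of_mul_eq_one_left ((mul_comm _ _).trans (card_mul_apply_univ_eq_one hmeas hν))
  simpa [hunif, div_eq_mul_inv] using
    measure_preimage_inter_preimage_eq_card_mul hmeas hν A .univ

theorem indepFun_comp_of_measure_inter_eq {γ : Type*} [MeasurableSpace γ] (g : G → γ) :
    ProbabilityTheory.IndepFun (g ∘ τ) Y P := by
  classical
  rw [ProbabilityTheory.indepFun_iff_measure_inter_preimage_eq_mul]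
  intro s B _ hB
  set A : Finset G := {σ | g σ ∈ s}
  have hA : (g ∘ τ) ⁻¹' s = τ ⁻¹' A := by
    ext
    simp [A]
  have hτ : P (τ ⁻¹' A) = #A * ν Set.univ := by
    simpa using measure_preimage_inter_preimage_eq_card_mul hmeas hν A .univ
  have hY : P (Y ⁻¹' B) = Fintype.card G * ν B := by
    simpa using measure_preimage_inter_preimage_eq_card_mul hmeas hν univ hB
  rw [hA, hτ, hY, measure_preimage_inter_preimage_eq_card_mul hmeas hν A hB]
  calc (#A : ℝ≥0∞) * ν B = #A * (Fintype.card G * ν Set.univ) * ν B := by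
        rw [card_mul_apply_univ_eq_one hmeas hν, mul_one]
    _ = #A * ν Set.univ * (Fintype.card G * ν B) := by ring

end UniformLabel

theorem measurePreserving_comp_perm {ι α : Type*} [Fintype ι] [MeasurableSpace α]
    (μ : Measure α) [SigmaFinite μ] (σ : Equiv.Perm ι) :
    MeasurePreserving (fun ω : ι → α => ω ∘ σ)
      (Measure.pi fun _ => μ) (Measure.pi fun _ => μ) := by
  convert measurePreserving_piCongrLeft (fun _ : ι => μ) σ.symm using 1
  ext ω i
  simp [MeasurableEquiv.coe_piCongrLeft, Equiv.piCongrLeft_apply]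

theorem measurableSet_setOf_strictMono {m : ℕ} :
    MeasurableSet {ω : Fin m → ℝ | StrictMono ω} := by
  simp only [StrictMono, Set.ofPred_forall]
  exact .iInter fun i => .iInter fun j => .iInter fun _ =>
    measurableSet_lt (measurable_pi_apply i) (measurable_pi_apply j)

section IIDSample

variable (μ : Measure ℝ) [SigmaFinite μ] [NullSingletonClass μ] {m : ℕ}

theorem measure_pi_setOf_apply_eq_apply {i j : Fin m} (hij : i ≠ j) :
    Measure.pi (fun _ => μ) {ω | ω i = ω j} = 0 := by
  obtain ⟨n, rfl⟩ := Nat.exists_eq_succ_of_ne_zero (Fin.pos i).ne'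
  obtain ⟨j, rfl⟩ := Fin.exists_succAbove_eq hij.symm
  have hdiag : MeasurableSet {p : ℝ × (Fin n → ℝ) | p.1 = p.2 j} :=
    measurableSet_eq_fun measurable_fst (by fun_prop)
  calc Measure.pi (fun _ => μ) {ω | ω i = ω (i.succAbove j)}
      = (μ.prod (Measure.pi fun _ => μ)) {p : ℝ × (Fin n → ℝ) | p.1 = p.2 j} :=
        (measurePreserving_piFinSuccAbove (fun _ => μ) i).measure_preimage
          hdiag.nullMeasurableSet
    _ = 0 := by simp [Measure.prod_apply_symm hdiag]

theorem ae_injective_pi :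
    ∀ᵐ ω ∂Measure.pi (fun _ : Fin m => μ), Function.Injective ω := by
  have h : ∀ i j, ∀ᵐ ω ∂Measure.pi (fun _ : Fin m => μ), ω i = ω j → i = j := by
    intro i j
    by_cases hij : i = j
    · exact .of_forall fun _ _ => hij
    · exact ae_iff.2 (by simpa [hij] using measure_pi_setOf_apply_eq_apply μ hij)
  simpa only [Function.Injective, Filter.eventually_all] using h

theorem sort_eq_inter_ae_eq (σ : Equiv.Perm (Fin m)) (B : Set (Fin m → ℝ)) :
    ({ω | Tuple.sort ω = σ} ∩ (fun ω => ω ∘ Tuple.sort ω) ⁻¹' B : Set (Fin m → ℝ))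
      =ᵐ[Measure.pi fun _ => μ] (· ∘ σ) ⁻¹' ({ω | StrictMono ω} ∩ B) := by
  filter_upwards [ae_injective_pi μ] with ω hω
  change (Tuple.sort ω = σ ∧ ω ∘ Tuple.sort ω ∈ B) = (StrictMono (ω ∘ σ) ∧ ω ∘ σ ∈ B)
  rw [← Tuple.sort_eq_iff_strictMono hω]
  exact propext (and_congr_right fun h => by rw [h])

theorem nullMeasurableSet_sort_eq_inter (σ : Equiv.Perm (Fin m)) {B : Set (Fin m → ℝ)}
    (hB : MeasurableSet B) :
    NullMeasurableSet ({ω | Tuple.sort ω = σ} ∩ (fun ω => ω ∘ Tuple.sort ω) ⁻¹' B)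
      (Measure.pi fun _ => μ) :=
  ((measurableSet_setOf_strictMono.inter hB).preimage
    (measurePreserving_comp_perm μ σ).measurable).nullMeasurableSet.congr
      (sort_eq_inter_ae_eq μ σ B).symm

theorem measure_sort_eq_inter (σ : Equiv.Perm (Fin m)) {B : Set (Fin m → ℝ)}
    (hB : MeasurableSet B) :
    Measure.pi (fun _ => μ) ({ω | Tuple.sort ω = σ} ∩ (fun ω => ω ∘ Tuple.sort ω) ⁻¹' B)
      = Measure.pi (fun _ => μ) ({ω | StrictMono ω} ∩ B) := by
  rw [measure_congr (sort_eq_inter_ae_eq μ σ B),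
    (measurePreserving_comp_perm μ σ).measure_preimage
      (measurableSet_setOf_strictMono.inter hB).nullMeasurableSet]

end IIDSample

/-- **The rank of an exchangeable test point is uniform and independent of the
order statistics.**

Let `S₁, …, S_{n+1}` be i.i.d. with an atomless distribution `μ`, and let
`R = Σᵢ 1{Sᵢ ≤ S_{n+1}}` be the rank of the last point. Then
`R ∼ Unif{1, …, n+1}` and `R` is independent of the order statistics vector
`(S_{(1)}, …, S_{(n+1)})`. -/
theorem rank_uniform_and_indep_of_order_stats
    (n : ℕ) (μ : Measure ℝ) [IsProbabilityMeasure μ]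
    (hatomless : ∀ x : ℝ, μ {x} = 0) :
    (∀ k ∈ Finset.Icc 1 (n + 1),
      (Measure.pi fun _ : Fin (n + 1) => μ)
        {ω : Fin (n + 1) → ℝ |
          (Finset.univ.filter fun i => ω i ≤ ω (Fin.last n)).card = k}
      = ((n : ENNReal) + 1)⁻¹) ∧
    ProbabilityTheory.IndepFun
      (fun ω : Fin (n + 1) → ℝ =>
        (Finset.univ.filter fun i => ω i ≤ ω (Fin.last n)).card)
      (fun ω : Fin (n + 1) → ℝ => fun r : Fin (n + 1) => orderStat (r.1 + 1) ω)
      (Measure.pi fun _ : Fin (n + 1) => μ) := by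
  have : NullSingletonClass μ := ⟨hatomless⟩
  have hmeas := nullMeasurableSet_sort_eq_inter μ (m := n + 1)
  have hν := measure_sort_eq_inter μ (m := n + 1)
  refine ⟨fun k hk => ?_, ?_⟩
  · rw [Finset.mem_Icc] at hk
    set j : Fin (n + 1) := ⟨k - 1, by omega⟩
    have hrank : {ω : Fin (n + 1) → ℝ | #{i | ω i ≤ ω (Fin.last n)} = k}
        = Tuple.sort ⁻¹' ({σ | σ.symm (Fin.last n) = j} : Finset (Equiv.Perm (Fin (n + 1)))) := by
      ext ω
      simp [Tuple.card_filter_le_apply_last, j, Fin.ext_iff]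
      omega
    rw [hrank, measure_preimage_eq_card_div hmeas hν,
      Equiv.Perm.card_filter_symm_apply_eq_div_card_perm, Fintype.card_fin, Nat.cast_add_one]
  · have hrank : (fun ω : Fin (n + 1) → ℝ => #{i | ω i ≤ ω (Fin.last n)})
        = (fun σ : Equiv.Perm (Fin (n + 1)) => (σ.symm (Fin.last n) : ℕ) + 1) ∘ Tuple.sort :=
      funext Tuple.card_filter_le_apply_last
    have horder : (fun ω : Fin (n + 1) → ℝ => fun r : Fin (n + 1) => orderStat (r.1 + 1) ω)
        = fun ω => ω ∘ Tuple.sort ω :=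
      funext₂ orderStat_succ
    rw [hrank, horder]
    exact indepFun_comp_of_measure_inter_eq hmeas hν _
end
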